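/- arXiv:1808.07130 — 2 statements merged into one kernel-verified Lean document; each statement's English description precedes it below -/
import Mathlib

section
/- Let c > 0, Z > 0, T > 0, A₀ > 0, and define A(z,t) = A₀ · exp(c·A₀·z·(1+Z)·(e^t − 1) + t) for 0 ≤ z ≤ Z, 0 ≤ t ≤ T. Then A satisfies the integral equation A(z,t) = A₀ + ∫₀^t [ c·(1+Z)·(A ⋆ A)(z,s) + A(z,s) ] ds, where (A ⋆ A)(z,s) = ∫₀^z A(z−y, s)·A(y, s) dy. -/
/-!
The exponent of `A` is affine in `z`, so `A (z - y) s * A y s` does not depend on `y` and the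
convolution is `z` times that product. With `K = c A₀ z (1 + Z)` the integrand then becomes
`(K eˢ + 1) A z s`, and `s ↦ A₀ exp (K (eˢ - 1) + s)` solves `F' = (K eˢ + 1) F` with `F 0 = A₀`.
-/

open Real intervalIntegral

theorem integral_self_conv_of_eq_mul_exp {f : ℝ → ℝ} {a u v : ℝ}
    (hf : ∀ y, f y = a * exp (y * u + v)) (z : ℝ) :
    ∫ y in (0:ℝ)..z, f (z - y) * f y = z * (a ^ 2 * exp (z * u + 2 * v)) := by
  have hconst : ∀ y, f (z - y) * f y = a ^ 2 * exp (z * u + 2 * v) := by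
    intro y
    rw [hf, hf, mul_mul_mul_comm, ← exp_add]
    ring_nf
  simp only [hconst, integral_const, sub_zero, smul_eq_mul]

theorem hasDerivAt_mul_exp_mul_exp_sub_one_add (a K s : ℝ) :
    HasDerivAt (fun s => a * exp (K * (exp s - 1) + s))
      (K * exp s * (a * exp (K * (exp s - 1) + s)) + a * exp (K * (exp s - 1) + s)) s := by
  have hexponent : HasDerivAt (fun s => K * (exp s - 1) + s) (K * exp s + 1) s :=
    (((hasDerivAt_exp s).sub_const 1).const_mul K).add (hasDerivAt_id s)
  exact (hexponent.exp.const_mul a).congr_deriv (by ring)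

theorem mul_exp_mul_exp_sub_one_add_eq_add_integral (a K t : ℝ) :
    a * exp (K * (exp t - 1) + t) =
      a + ∫ s in (0:ℝ)..t,
        K * exp s * (a * exp (K * (exp s - 1) + s)) + a * exp (K * (exp s - 1) + s) := by
  rw [integral_eq_sub_of_hasDerivAt (fun s _ => hasDerivAt_mul_exp_mul_exp_sub_one_add a K s)
    ((by fun_prop : Continuous _).intervalIntegrable _ _)]
  simp

theorem A_integral_equation_general (c Z T A₀ : ℝ)
    (A : ℝ → ℝ → ℝ)
    (hA : ∀ z t : ℝ, A z t = A₀ * Real.exp (c * A₀ * z * (1 + Z) * (Real.exp t - 1) + t)) :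
    ∀ z t : ℝ, 0 ≤ z → z ≤ Z → 0 ≤ t → t ≤ T →
      A z t = A₀ + ∫ s in (0:ℝ)..t,
        (c * (1 + Z) * ∫ y in (0:ℝ)..z, A (z - y) s * A y s) + A z s := by
  intro z t _ _ _ _
  set K := c * A₀ * z * (1 + Z)
  have hAz : ∀ s, A z s = A₀ * exp (K * (exp s - 1) + s) := fun s => hA z s
  have hconv : ∀ s, c * (1 + Z) * ∫ y in (0:ℝ)..z, A (z - y) s * A y s = K * exp s * A z s := by
    intro s
    have hslice : ∀ y, A y s = A₀ * exp (y * (c * A₀ * (1 + Z) * (exp s - 1)) + s) := by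
      intro y
      rw [hA]
      ring_nf
    rw [integral_self_conv_of_eq_mul_exp (f := fun y => A y s) hslice, hAz,
      show z * (c * A₀ * (1 + Z) * (exp s - 1)) + 2 * s = K * (exp s - 1) + s + s by ring,
      exp_add]
    ring
  rw [hAz t, mul_exp_mul_exp_sub_one_add_eq_add_integral]
  congr 1
  refine integral_congr fun s _ => ?_
  simp only [hconv, hAz]

theorem A_integral_equation (c Z T A₀ : ℝ) (hc : 0 < c) (hZ : 0 < Z) (hT : 0 < T)
    (hA₀ : 0 < A₀)
    (A : ℝ → ℝ → ℝ)
    (hA : ∀ z t : ℝ, A z t = A₀ * Real.exp (c * A₀ * z * (1 + Z) * (Real.exp t - 1) + t)) :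
    ∀ z t : ℝ, 0 ≤ z → z ≤ Z → 0 ≤ t → t ≤ T →
      A z t = A₀ + ∫ s in (0:ℝ)..t,
        (c * (1 + Z) * ∫ y in (0:ℝ)..z, A (z - y) s * A y s) + A z s :=
  A_integral_equation_general c Z T A₀ A hA
end

section
/- Comparison lemma: Let Z, T > 0, let f : [0,Z]×[0,T] → [0,∞) be continuous, let c' > 0 and A₀ > 0, and suppose f(z,t) ≤ A₀ + ∫₀^t [ c'·(f ⋆ f)(z,s) + A₀ ] ds for all (z,t) ∈ [0,Z]×[0,T], where (f ⋆ f)(z,s) = ∫₀^z f(z−y,s) f(y,s) dy. If A is the continuous function satisfying A(z,t) = A₀ + ∫₀^t [ c'·(A ⋆ A)(z,s) + A(z,s) ] ds with A ≥ A₀ everywhere, then f(z,t) ≤ A(z,t) for all (z,t) ∈ [0,Z]×[0,T]. -/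
/-!
Extend `f` and `A` continuously off the rectangle by clamping. Subtracting the two integral
relations and using `A ≥ A₀` gives `f - A ≤ c' ∫₀ᵗ (f ⋆ f - A ⋆ A)`, and writing
`f ⋆ f - A ⋆ A = ∫₀ᶻ f(z - y)(f - A)(y) + A(y)(f - A)(z - y) dy` bounds the integrand by
`2 K Z u(s)`, where `K` bounds `f` and `A` and `u(s) = max_z (f - A)⁺(z, s)`. Hence
`u(t) ≤ C ∫₀ᵗ u`, and Grönwall's inequality forces `u = 0`.
-/

open Set

theorem le_zero_of_le_mul_integral {u : ℝ → ℝ} {C T : ℝ} (hu : Continuous u) (hC : 0 ≤ C)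
    (h : ∀ t ∈ Icc 0 T, u t ≤ C * ∫ s in (0:ℝ)..t, u s) : ∀ t ∈ Icc 0 T, u t ≤ 0 := by
  have hM : ∀ t ∈ Icc 0 T, ∫ s in (0:ℝ)..t, u s ≤ 0 := by
    have hderiv : ∀ t, HasDerivAt (fun t => ∫ s in (0:ℝ)..t, u s) (u t) t := fun t =>
      (hu.integral_hasStrictDerivAt 0 t).hasDerivAt
    intro t ht
    simpa [gronwallBound_ε0_δ0] using
      le_gronwallBound_of_liminf_deriv_right_le (δ := 0) (K := C) (ε := 0)
      (fun t _ => (hderiv t).continuousAt.continuousWithinAt)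
      (fun t _ r hr => (hderiv t).hasDerivWithinAt.liminf_right_slope_le hr)
      (by simp) (fun t ht => (h t (Ico_subset_Icc_self ht)).trans_eq (add_zero _).symm)
      t ht
  exact fun t ht => (h t ht).trans (mul_nonpos_of_nonneg_of_nonpos hC (hM t ht))

noncomputable def selfConv (φ : ℝ → ℝ) (z : ℝ) : ℝ := ∫ y in (0:ℝ)..z, φ (z - y) * φ y

theorem selfConv_sub_selfConv_le {φ ψ : ℝ → ℝ} {z K m : ℝ} (hφ : Continuous φ)
    (hψ : Continuous ψ) (hz : 0 ≤ z) (hφ0 : ∀ y ∈ Icc 0 z, 0 ≤ φ y)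
    (hψ0 : ∀ y ∈ Icc 0 z, 0 ≤ ψ y) (hφK : ∀ y ∈ Icc 0 z, φ y ≤ K)
    (hψK : ∀ y ∈ Icc 0 z, ψ y ≤ K) (hm0 : 0 ≤ m) (hm : ∀ y ∈ Icc 0 z, φ y - ψ y ≤ m) :
    selfConv φ z - selfConv ψ z ≤ 2 * K * m * z := by
  have hint : ∀ χ : ℝ → ℝ, Continuous χ →
      IntervalIntegrable (fun y => χ (z - y) * χ y) MeasureTheory.volume 0 z := fun χ hχ =>
    ((hχ.comp (continuous_const.sub continuous_id)).mul hχ).intervalIntegrable 0 z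
  rw [selfConv, selfConv, ← intervalIntegral.integral_sub (hint φ hφ) (hint ψ hψ)]
  calc _ ≤ ∫ _ in (0:ℝ)..z, 2 * K * m :=
        intervalIntegral.integral_mono_on hz ((hint φ hφ).sub (hint ψ hψ))
          intervalIntegrable_const fun y hy => ?_
    _ = 2 * K * m * z := by simp only [intervalIntegral.integral_const, smul_eq_mul]; ring
  have hzy : z - y ∈ Icc 0 z := ⟨by linarith [hy.2], by linarith [hy.1]⟩
  calc φ (z - y) * φ y - ψ (z - y) * ψ y
      = φ (z - y) * (φ y - ψ y) + ψ y * (φ (z - y) - ψ (z - y)) := by ring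
    _ ≤ K * m + K * m := add_le_add
      ((mul_le_mul_of_nonneg_left (hm y hy) (hφ0 _ hzy)).trans
        (mul_le_mul_of_nonneg_right (hφK _ hzy) hm0))
      ((mul_le_mul_of_nonneg_left (hm _ hzy) (hψ0 y hy)).trans
        (mul_le_mul_of_nonneg_right (hψK y hy) hm0))
    _ = 2 * K * m := by ring

section Comparison

variable {F G : ℝ → ℝ → ℝ} {Z T c a b : ℝ}

theorem continuous_selfConv_section (hF : Continuous fun p : ℝ × ℝ => F p.1 p.2) (z : ℝ) :
    Continuous fun s => selfConv (F · s) z :=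
  intervalIntegral.continuous_parametric_intervalIntegral_of_continuous'
    (f := fun s y => F (z - y) s * F y s)
    ((hF.comp (by fun_prop : Continuous fun p : ℝ × ℝ => (z - p.2, p.1))).mul
      (hF.comp (by fun_prop : Continuous fun p : ℝ × ℝ => (p.2, p.1)))) 0 z

theorem sub_le_integral_selfConv_sub (hF : Continuous fun p : ℝ × ℝ => F p.1 p.2)
    (hG : Continuous fun p : ℝ × ℝ => G p.1 p.2) {z t : ℝ}
    (hsub : F z t ≤ a + ∫ s in (0:ℝ)..t, c * selfConv (F · s) z + b)
    (hsuper : a + ∫ s in (0:ℝ)..t, c * selfConv (G · s) z + b ≤ G z t) :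
    F z t - G z t ≤ ∫ s in (0:ℝ)..t, c * (selfConv (F · s) z - selfConv (G · s) z) := by
  have hint : ∀ H : ℝ → ℝ → ℝ, (Continuous fun p : ℝ × ℝ => H p.1 p.2) →
      IntervalIntegrable (fun s => c * selfConv (H · s) z + b) MeasureTheory.volume 0 t :=
    fun H hH => ((continuous_const.mul (continuous_selfConv_section hH z)).add
      continuous_const).intervalIntegrable 0 t
  have key := sub_le_sub hsub hsuper
  rw [add_sub_add_left_eq_sub, ← intervalIntegral.integral_sub (hint F hF) (hint G hG)] at key
  simpa only [add_sub_add_right_eq_sub, mul_sub] using key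

theorem add_integral_le_of_eq_add_integral {z t : ℝ}
    (hG : Continuous fun p : ℝ × ℝ => G p.1 p.2) (ht : 0 ≤ t)
    (hGb : ∀ s ∈ Icc 0 t, b ≤ G z s)
    (heq : G z t = a + ∫ s in (0:ℝ)..t, c * selfConv (G · s) z + G z s) :
    a + ∫ s in (0:ℝ)..t, c * selfConv (G · s) z + b ≤ G z t := by
  have hconv : Continuous fun s => c * selfConv (G · s) z :=
    continuous_const.mul (continuous_selfConv_section hG z)
  rw [heq]
  gcongr
  exact intervalIntegral.integral_mono_on ht ((hconv.add continuous_const).intervalIntegrable 0 t)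
    ((hconv.add (hG.comp (.prodMk_right z))).intervalIntegrable 0 t)
    fun s hs => add_le_add_right (hGb s hs) _

theorem sub_le_mul_integral_of_sub_le (hF : Continuous fun p : ℝ × ℝ => F p.1 p.2)
    (hG : Continuous fun p : ℝ × ℝ => G p.1 p.2) (hc : 0 ≤ c) {K : ℝ} {u : ℝ → ℝ}
    (hu : Continuous u) (hu0 : ∀ t, 0 ≤ u t)
    (hF0 : ∀ z ∈ Icc 0 Z, ∀ t ∈ Icc 0 T, 0 ≤ F z t)
    (hG0 : ∀ z ∈ Icc 0 Z, ∀ t ∈ Icc 0 T, 0 ≤ G z t)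
    (hFK : ∀ z ∈ Icc 0 Z, ∀ t ∈ Icc 0 T, F z t ≤ K)
    (hGK : ∀ z ∈ Icc 0 Z, ∀ t ∈ Icc 0 T, G z t ≤ K)
    (hFG : ∀ z ∈ Icc 0 Z, ∀ t ∈ Icc 0 T, F z t - G z t ≤ u t)
    {z t : ℝ} (hz : z ∈ Icc 0 Z) (ht : t ∈ Icc 0 T)
    (hsub : F z t ≤ a + ∫ s in (0:ℝ)..t, c * selfConv (F · s) z + b)
    (hsuper : a + ∫ s in (0:ℝ)..t, c * selfConv (G · s) z + b ≤ G z t) :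
    F z t - G z t ≤ c * (2 * K * Z) * ∫ s in (0:ℝ)..t, u s := by
  have hK0 : 0 ≤ K := (hF0 z hz t ht).trans (hFK z hz t ht)
  rw [← intervalIntegral.integral_const_mul]
  refine (sub_le_integral_selfConv_sub hF hG hsub hsuper).trans <|
    intervalIntegral.integral_mono_on ht.1 ?_ ((hu.const_mul _).intervalIntegrable 0 t)
      fun s hs => ?_
  · exact (continuous_const.mul ((continuous_selfConv_section hF z).sub
      (continuous_selfConv_section hG z))).intervalIntegrable 0 t
  have hsT : s ∈ Icc 0 T := ⟨hs.1, hs.2.trans ht.2⟩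
  have hzZ : Icc 0 z ⊆ Icc 0 Z := Icc_subset_Icc_right hz.2
  have hconv := selfConv_sub_selfConv_le
    (hF.comp (.prodMk_left s)) (hG.comp (.prodMk_left s)) hz.1
    (fun y hy => hF0 y (hzZ hy) s hsT) (fun y hy => hG0 y (hzZ hy) s hsT)
    (fun y hy => hFK y (hzZ hy) s hsT) (fun y hy => hGK y (hzZ hy) s hsT)
    (hu0 s) (fun y hy => hFG y (hzZ hy) s hsT)
  calc c * (selfConv (F · s) z - selfConv (G · s) z) ≤ c * (2 * K * u s * z) :=
        mul_le_mul_of_nonneg_left hconv hc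
    _ ≤ c * (2 * K * u s * Z) := by have := hu0 s; gcongr; exact hz.2
    _ = c * (2 * K * Z) * u s := by ring

theorem le_of_subsolution_of_supersolution (hF : Continuous fun p : ℝ × ℝ => F p.1 p.2)
    (hG : Continuous fun p : ℝ × ℝ => G p.1 p.2) (hc : 0 ≤ c)
    (hF0 : ∀ z ∈ Icc 0 Z, ∀ t ∈ Icc 0 T, 0 ≤ F z t)
    (hG0 : ∀ z ∈ Icc 0 Z, ∀ t ∈ Icc 0 T, 0 ≤ G z t)
    (hsub : ∀ z ∈ Icc 0 Z, ∀ t ∈ Icc 0 T,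
      F z t ≤ a + ∫ s in (0:ℝ)..t, c * selfConv (F · s) z + b)
    (hsuper : ∀ z ∈ Icc 0 Z, ∀ t ∈ Icc 0 T,
      a + ∫ s in (0:ℝ)..t, c * selfConv (G · s) z + b ≤ G z t) :
    ∀ z ∈ Icc 0 Z, ∀ t ∈ Icc 0 T, F z t ≤ G z t := by
  intro z₀ hz₀ t₀ ht₀
  obtain ⟨K, hK⟩ :=
    (isCompact_Icc.prod isCompact_Icc).bddAbove_image (hF.max hG).continuousOn
  have hFK : ∀ z ∈ Icc 0 Z, ∀ t ∈ Icc 0 T, F z t ≤ K := fun z hz t ht =>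
    (le_max_left _ _).trans (hK (mem_image_of_mem _ (mk_mem_prod hz ht)))
  have hGK : ∀ z ∈ Icc 0 Z, ∀ t ∈ Icc 0 T, G z t ≤ K := fun z hz t ht =>
    (le_max_right _ _).trans (hK (mem_image_of_mem _ (mk_mem_prod hz ht)))
  set u : ℝ → ℝ := fun t => sSup ((fun z => max (F z t - G z t) 0) '' Icc 0 Z)
  have hu : Continuous u := isCompact_Icc.continuous_sSup (by fun_prop)
  have hu0 : ∀ t, 0 ≤ u t := fun t =>
    Real.sSup_nonneg (by rintro _ ⟨z, -, rfl⟩; exact le_max_right _ _)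
  have hFG : ∀ z ∈ Icc 0 Z, ∀ t ∈ Icc 0 T, F z t - G z t ≤ u t := fun z hz t _ =>
    (le_max_left _ _).trans <| le_csSup (isCompact_Icc.bddAbove_image (by fun_prop))
      (mem_image_of_mem _ hz)
  set C := c * (2 * K * Z)
  have hC : 0 ≤ C := by
    have hK0 := (hF0 z₀ hz₀ t₀ ht₀).trans (hFK z₀ hz₀ t₀ ht₀)
    have hZ0 := hz₀.1.trans hz₀.2
    positivity
  have hu_le : ∀ t ∈ Icc 0 T, u t ≤ C * ∫ s in (0:ℝ)..t, u s := fun t ht =>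
    have hM0 := mul_nonneg hC (intervalIntegral.integral_nonneg ht.1 fun s _ => hu0 s)
    Real.sSup_le (by
      rintro _ ⟨z, hz, rfl⟩
      exact max_le (sub_le_mul_integral_of_sub_le hF hG hc hu hu0 hF0 hG0 hFK hGK hFG hz ht
        (hsub z hz t ht) (hsuper z hz t ht)) hM0) hM0
  linarith [hFG z₀ hz₀ t₀ ht₀, le_zero_of_le_mul_integral hu hC hu_le t₀ ht₀]

end Comparison

section RectExtend

variable {Z T : ℝ}

noncomputable def rectExtend (f : ℝ → ℝ → ℝ) (hZ : 0 ≤ Z) (hT : 0 ≤ T) (z t : ℝ) : ℝ :=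
  f (projIcc 0 Z hZ z) (projIcc 0 T hT t)

variable {f : ℝ → ℝ → ℝ} (hZ : 0 ≤ Z) (hT : 0 ≤ T)

theorem rectExtend_eq {z t : ℝ} (hz : z ∈ Icc 0 Z) (ht : t ∈ Icc 0 T) :
    rectExtend f hZ hT z t = f z t := by
  simp only [rectExtend, projIcc_of_mem _ hz, projIcc_of_mem _ ht]

theorem continuous_rectExtend
    (hf : ContinuousOn (fun p : ℝ × ℝ => f p.1 p.2) (Icc 0 Z ×ˢ Icc 0 T)) :
    Continuous fun p : ℝ × ℝ => rectExtend f hZ hT p.1 p.2 :=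
  hf.comp_continuous
    (((continuous_subtype_val.comp continuous_projIcc).comp continuous_fst).prodMk
      ((continuous_subtype_val.comp continuous_projIcc).comp continuous_snd))
    fun p => mk_mem_prod (projIcc 0 Z hZ p.1).2 (projIcc 0 T hT p.2).2

theorem integral_selfConv_rectExtend (H : ℝ → ℝ → ℝ) {z t : ℝ} (hz : z ∈ Icc 0 Z)
    (ht : t ∈ Icc 0 T) :
    ∫ s in (0:ℝ)..t, H (selfConv (rectExtend f hZ hT · s) z) (rectExtend f hZ hT z s) =
      ∫ s in (0:ℝ)..t, H (selfConv (f · s) z) (f z s) := by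
  refine intervalIntegral.integral_congr fun s hs => ?_
  rw [uIcc_of_le ht.1] at hs
  have hsT : s ∈ Icc 0 T := ⟨hs.1, hs.2.trans ht.2⟩
  have hconv : selfConv (rectExtend f hZ hT · s) z = selfConv (f · s) z := by
    refine intervalIntegral.integral_congr fun y hy => ?_
    rw [uIcc_of_le hz.1] at hy
    have hy' : y ∈ Icc 0 Z := ⟨hy.1, hy.2.trans hz.2⟩
    have hzy : z - y ∈ Icc 0 Z := ⟨by linarith [hy.2], by linarith [hy.1, hz.2]⟩
    simp only [rectExtend_eq hZ hT hy' hsT, rectExtend_eq hZ hT hzy hsT]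
  simp only [hconv, rectExtend_eq hZ hT hz hsT]

end RectExtend

theorem comparison_lemma (Z T c' A₀ : ℝ) (hZ : 0 < Z) (hT : 0 < T) (hc' : 0 < c')
    (hA₀ : 0 < A₀) (f A : ℝ → ℝ → ℝ)
    (hf_cont : ContinuousOn (fun p : ℝ × ℝ => f p.1 p.2) (Icc 0 Z ×ˢ Icc 0 T))
    (hf_nonneg : ∀ z ∈ Icc (0:ℝ) Z, ∀ t ∈ Icc (0:ℝ) T, 0 ≤ f z t)
    (hf_le : ∀ z ∈ Icc (0:ℝ) Z, ∀ t ∈ Icc (0:ℝ) T,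
      f z t ≤ A₀ + ∫ s in (0:ℝ)..t,
        (c' * ∫ y in (0:ℝ)..z, f (z - y) s * f y s) + A₀)
    (hA_cont : ContinuousOn (fun p : ℝ × ℝ => A p.1 p.2) (Icc 0 Z ×ˢ Icc 0 T))
    (hA_eq : ∀ z ∈ Icc (0:ℝ) Z, ∀ t ∈ Icc (0:ℝ) T,
      A z t = A₀ + ∫ s in (0:ℝ)..t,
        (c' * ∫ y in (0:ℝ)..z, A (z - y) s * A y s) + A z s)
    (hA_ge : ∀ z ∈ Icc (0:ℝ) Z, ∀ t ∈ Icc (0:ℝ) T, A₀ ≤ A z t) :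
    ∀ z ∈ Icc (0:ℝ) Z, ∀ t ∈ Icc (0:ℝ) T, f z t ≤ A z t := by
  have hZ₀ := hZ.le
  have hT₀ := hT.le
  intro z hz t ht
  rw [← rectExtend_eq (f := f) hZ₀ hT₀ hz ht, ← rectExtend_eq (f := A) hZ₀ hT₀ hz ht]
  refine le_of_subsolution_of_supersolution (continuous_rectExtend hZ₀ hT₀ hf_cont)
    (continuous_rectExtend hZ₀ hT₀ hA_cont) hc'.le (a := A₀) (b := A₀) (fun z hz t ht => ?_)
    (fun z hz t ht => ?_) (fun z hz t ht => ?_) (fun z hz t ht => ?_) z hz t ht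
  · rw [rectExtend_eq hZ₀ hT₀ hz ht]
    exact hf_nonneg z hz t ht
  · rw [rectExtend_eq hZ₀ hT₀ hz ht]
    exact hA₀.le.trans (hA_ge z hz t ht)
  · rw [rectExtend_eq hZ₀ hT₀ hz ht,
      integral_selfConv_rectExtend hZ₀ hT₀ (fun x _ => c' * x + A₀) hz ht]
    exact hf_le z hz t ht
  · refine add_integral_le_of_eq_add_integral (continuous_rectExtend hZ₀ hT₀ hA_cont) ht.1
      (fun s hs => ?_) ?_
    · have hs' : s ∈ Icc 0 T := ⟨hs.1, hs.2.trans ht.2⟩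
      rw [rectExtend_eq hZ₀ hT₀ hz hs']
      exact hA_ge z hz s hs'
    rw [rectExtend_eq hZ₀ hT₀ hz ht,
      integral_selfConv_rectExtend hZ₀ hT₀ (fun x y => c' * x + y) hz ht]
    exact hA_eq z hz t ht
end
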